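/- arXiv:2203.14624 — 3 statements merged into one kernel-verified Lean document; each statement's English description precedes it below -/
import Mathlib

section
/- For every t > 0 one has h₂(t)/h₁(t) = h₂'(t)/h₁'(t) + 1/(h₁(t)·h₁'(t)), and if in addition ∫₀^∞ G(s) ds < ∞, then h₂(t)/h₁(t) ≤ ∫₀^∞ G(s) ds + 1/t for all t > 0. -/
open Set Filter MeasureTheory Topology

/-!
The Wronskian `h₁' h₂ - h₁ h₂'` is constant, equal to `1`, which gives the identity after
dividing by `h₁ h₁'`. Since `(h₁ h₁')' = h₁'² + G h₁² ≥ 0`, we get `h₁ h₁' ≥ 0`, hence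
`(h₁'²)' = 2 G h₁ h₁' ≥ 0`; as `h₁'` cannot cross `0`, this forces `h₁' ≥ 1` and `h₁(t) ≥ t`.
Finally `(h₂'/h₁')' = G/h₁'² ≤ G`, so `h₂'/h₁' ≤ ∫₀^∞ G`, while `1/(h₁ h₁') ≤ 1/t`.
-/

lemma monotoneOn_Ici_of_hasDerivWithinAt_nonneg {f f' : ℝ → ℝ} {a : ℝ}
    (hf : ∀ x ∈ Ici a, HasDerivWithinAt f (f' x) (Ici a) x) (hf' : ∀ x ∈ Ioi a, 0 ≤ f' x) :
    MonotoneOn f (Ici a) := by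
  refine monotoneOn_of_hasDerivWithinAt_nonneg (convex_Ici a)
    (fun x hx => (hf x hx).continuousWithinAt) (fun x hx => ?_) (by simpa using hf')
  rw [interior_Ici] at hx ⊢
  exact ((hf x (Ioi_subset_Ici_self hx)).hasDerivAt (Ici_mem_nhds hx)).hasDerivWithinAt

structure IsSolution (G h h' : ℝ → ℝ) : Prop where
  hasDerivWithinAt : ∀ x ∈ Ici (0 : ℝ), HasDerivWithinAt h (h' x) (Ici 0) x
  hasDerivWithinAt_deriv : ∀ x ∈ Ici (0 : ℝ), HasDerivWithinAt h' (G x * h x) (Ici 0) x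

namespace IsSolution

variable {G h h' h₁ h₁' h₂ h₂' : ℝ → ℝ}

lemma of_contDiffOn (hh : ContDiffOn ℝ 2 h (Ici 0))
    (ode : ∀ t ∈ Ici (0 : ℝ), derivWithin (derivWithin h (Ici 0)) (Ici 0) t = G t * h t) :
    IsSolution G h (derivWithin h (Ici 0)) where
  hasDerivWithinAt x hx := (hh.differentiableOn (by norm_num) x hx).hasDerivWithinAt
  hasDerivWithinAt_deriv x hx := by
    rw [← ode x hx]
    exact ((hh.derivWithin (uniqueDiffOn_Ici 0) (m := 1) (by norm_num)).differentiableOn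
      one_ne_zero x hx).hasDerivWithinAt

lemma continuousOn_deriv (hs : IsSolution G h h') : ContinuousOn h' (Ici 0) :=
  fun x hx => (hs.hasDerivWithinAt_deriv x hx).continuousWithinAt

lemma hasDerivAt_deriv (hs : IsSolution G h h') {x : ℝ} (hx : 0 < x) :
    HasDerivAt h' (G x * h x) x :=
  (hs.hasDerivWithinAt_deriv x hx.le).hasDerivAt (Ici_mem_nhds hx)

lemma wronskian_eq (s₁ : IsSolution G h₁ h₁') (s₂ : IsSolution G h₂ h₂') {t : ℝ} (ht : 0 ≤ t) :
    h₁' t * h₂ t - h₁ t * h₂' t = h₁' 0 * h₂ 0 - h₁ 0 * h₂' 0 := by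
  have hW : ∀ x ∈ Ici (0 : ℝ),
      HasDerivWithinAt (fun y => h₁' y * h₂ y - h₁ y * h₂' y) 0 (Ici 0) x := fun x hx =>
    (((s₁.hasDerivWithinAt_deriv x hx).mul (s₂.hasDerivWithinAt x hx)).sub
      ((s₁.hasDerivWithinAt x hx).mul (s₂.hasDerivWithinAt_deriv x hx))).congr_deriv (by ring)
  exact constant_of_has_deriv_right_zero (fun x hx => (hW x hx.1).continuousWithinAt.mono
    Icc_subset_Ici_self) (fun x hx => (hW x hx.1).mono (Ici_subset_Ici.2 hx.1)) t ⟨ht, le_rfl⟩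

variable (hG : ∀ x ∈ Ici (0 : ℝ), 0 ≤ G x)
include hG

lemma monotoneOn_mul_deriv (hs : IsSolution G h h') : MonotoneOn (fun x => h x * h' x) (Ici 0) :=
  monotoneOn_Ici_of_hasDerivWithinAt_nonneg
    (fun x hx => (hs.hasDerivWithinAt x hx).mul (hs.hasDerivWithinAt_deriv x hx))
    (fun x hx => by
      nlinarith [hG x (Ioi_subset_Ici_self hx), mul_self_nonneg (h' x), mul_self_nonneg (h x)])

lemma monotoneOn_deriv_sq (hs : IsSolution G h h') (h0 : 0 ≤ h 0 * h' 0) :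
    MonotoneOn (fun x => h' x * h' x) (Ici 0) := by
  refine monotoneOn_Ici_of_hasDerivWithinAt_nonneg
    (fun x hx => (hs.hasDerivWithinAt_deriv x hx).mul (hs.hasDerivWithinAt_deriv x hx))
    (fun x (hx : 0 < x) => ?_)
  have hhh' : 0 ≤ h x * h' x := h0.trans (hs.monotoneOn_mul_deriv hG self_mem_Ici hx.le hx.le)
  nlinarith [hG x hx.le]

lemma deriv_zero_le_deriv (hs : IsSolution G h h') (h0 : 0 ≤ h 0 * h' 0) (h'0 : 0 < h' 0)
    {t : ℝ} (ht : 0 ≤ t) : h' 0 ≤ h' t := by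
  have hsq := hs.monotoneOn_deriv_sq hG h0
  by_contra! hlt
  have hneg : h' t < 0 := by nlinarith [hsq self_mem_Ici ht ht]
  obtain ⟨s, hs_mem, hs0⟩ := intermediate_value_Icc' ht (hs.continuousOn_deriv.mono
    Icc_subset_Ici_self) ⟨hneg.le, h'0.le⟩
  have hsq_s := hsq self_mem_Ici hs_mem.1 hs_mem.1
  simp only [hs0, mul_zero] at hsq_s
  nlinarith

lemma deriv_zero_mul_le (hs : IsSolution G h h') (h0 : h 0 = 0) (h'0 : 0 < h' 0)
    {t : ℝ} (ht : 0 ≤ t) : h' 0 * t ≤ h t := by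
  have hmono : MonotoneOn (fun x => h x - h' 0 * x) (Ici 0) :=
    monotoneOn_Ici_of_hasDerivWithinAt_nonneg
      (fun x hx => (hs.hasDerivWithinAt x hx).sub ((hasDerivWithinAt_id x _).const_mul (h' 0)))
      (fun x (hx : 0 < x) => by
        simpa using hs.deriv_zero_le_deriv hG (by simp [h0]) h'0 hx.le)
  simpa [h0] using hmono self_mem_Ici ht ht

lemma div_deriv_sub_le_integral (s₁ : IsSolution G h₁ h₁') (s₂ : IsSolution G h₂ h₂')
    (hW : ∀ x ∈ Ici (0 : ℝ), h₁' x * h₂ x - h₁ x * h₂' x = 1)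
    (h₁'_ge : ∀ x ∈ Ici (0 : ℝ), 1 ≤ h₁' x) {t : ℝ} (ht : 0 ≤ t)
    (hGint : IntegrableOn G (Icc 0 t)) :
    h₂' t / h₁' t - h₂' 0 / h₁' 0 ≤ ∫ x in 0..t, G x := by
  have hne : ∀ x ∈ Ici (0 : ℝ), h₁' x ≠ 0 := fun x hx => by linarith [h₁'_ge x hx]
  refine intervalIntegral.sub_le_integral_of_hasDeriv_right_of_le ht
    ((s₂.continuousOn_deriv.div s₁.continuousOn_deriv hne).mono Icc_subset_Ici_self)
    (fun x hx => ?_) hGint (fun x hx => ?_) (g' := fun x => G x / h₁' x ^ 2)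
  · have hquot := (s₂.hasDerivAt_deriv hx.1).div (s₁.hasDerivAt_deriv hx.1) (hne x hx.1.le)
    rw [show G x * h₂ x * h₁' x - h₂' x * (G x * h₁ x) = G x by
      linear_combination G x * hW x hx.1.le] at hquot
    exact hquot.hasDerivWithinAt
  · exact div_le_self (hG x hx.1.le) (one_le_pow₀ (h₁'_ge x hx.1.le))

end IsSolution

theorem stmt_6_general (G h₁ h₂ : ℝ → ℝ)
    (hGnn : ∀ t ∈ Ici (0 : ℝ), 0 ≤ G t)
    (hh₁ : ContDiffOn ℝ 2 h₁ (Ici 0)) (hh₂ : ContDiffOn ℝ 2 h₂ (Ici 0))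
    (ode₁ : ∀ t ∈ Ici (0 : ℝ),
      derivWithin (derivWithin h₁ (Ici 0)) (Ici 0) t = G t * h₁ t)
    (ode₂ : ∀ t ∈ Ici (0 : ℝ),
      derivWithin (derivWithin h₂ (Ici 0)) (Ici 0) t = G t * h₂ t)
    (h₁0 : h₁ 0 = 0) (h₁'0 : derivWithin h₁ (Ici 0) 0 = 1)
    (h₂0 : h₂ 0 = 1) (h₂'0 : derivWithin h₂ (Ici 0) 0 = 0)
    :
    (∀ t ∈ Ioi (0 : ℝ),
      h₂ t / h₁ t = derivWithin h₂ (Ici 0) t / derivWithin h₁ (Ici 0) t +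
        1 / (h₁ t * derivWithin h₁ (Ici 0) t)) ∧
    (IntegrableOn G (Ioi 0) →
      ∀ t ∈ Ioi (0 : ℝ),
        h₂ t / h₁ t ≤ (∫ s in Ioi (0 : ℝ), G s) + 1 / t) := by
  have s₁ := IsSolution.of_contDiffOn hh₁ ode₁
  have s₂ := IsSolution.of_contDiffOn hh₂ ode₂
  set h₁' := derivWithin h₁ (Ici 0)
  set h₂' := derivWithin h₂ (Ici 0)
  have hW : ∀ t ∈ Ici (0 : ℝ), h₁' t * h₂ t - h₁ t * h₂' t = 1 := fun t ht => by
    rw [s₁.wronskian_eq s₂ ht, h₁0, h₁'0, h₂0, h₂'0]; ring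
  have h₁'_ge : ∀ t ∈ Ici (0 : ℝ), 1 ≤ h₁' t := fun t ht => by
    simpa [h₁'0] using s₁.deriv_zero_le_deriv hGnn (by simp [h₁0]) (by simp [h₁'0]) ht
  have h₁_ge : ∀ t ∈ Ici (0 : ℝ), t ≤ h₁ t := fun t ht => by
    simpa [h₁'0] using s₁.deriv_zero_mul_le hGnn h₁0 (by simp [h₁'0]) ht
  have hid : ∀ t ∈ Ioi (0 : ℝ), h₂ t / h₁ t = h₂' t / h₁' t + 1 / (h₁ t * h₁' t) := by
    rintro t (ht : 0 < t)
    have h₁_ne : h₁ t ≠ 0 := by linarith [h₁_ge t ht.le]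
    have h₁'_ne : h₁' t ≠ 0 := by linarith [h₁'_ge t ht.le]
    field_simp
    linear_combination hW t ht.le
  refine ⟨hid, fun hGint t (ht : 0 < t) => ?_⟩
  have hratio := s₁.div_deriv_sub_le_integral hGnn s₂ hW h₁'_ge ht.le
    (((integrableOn_Ici_iff_integrableOn_Ioi).2 hGint).mono_set Icc_subset_Ici_self)
  rw [h₁'0, h₂'0, zero_div, sub_zero, intervalIntegral.integral_of_le ht.le] at hratio
  have htail : ∫ s in Ioc 0 t, G s ≤ ∫ s in Ioi 0, G s :=
    setIntegral_mono_set hGint ((ae_restrict_iff' measurableSet_Ioi).2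
      (ae_of_all _ fun x (hx : 0 < x) => hGnn x hx.le)) Ioc_subset_Ioi_self.eventuallyLE
  have hrec : 1 / (h₁ t * h₁' t) ≤ 1 / t :=
    one_div_le_one_div_of_le ht (by nlinarith [h₁_ge t ht.le, h₁'_ge t ht.le])
  rw [hid t ht]
  linarith

/-- `h₂/h₁ = h₂'/h₁' + 1/(h₁ h₁')` on `(0,∞)`; if moreover `∫₀^∞ G < ∞` then
`h₂(t)/h₁(t) ≤ ∫₀^∞ G + 1/t` for all `t > 0`. -/
theorem stmt_6 (G h₁ h₂ : ℝ → ℝ)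
    (hG : ContinuousOn G (Ici 0)) (hGnn : ∀ t ∈ Ici (0 : ℝ), 0 ≤ G t)
    (hh₁ : ContDiffOn ℝ 2 h₁ (Ici 0)) (hh₂ : ContDiffOn ℝ 2 h₂ (Ici 0))
    (ode₁ : ∀ t ∈ Ici (0 : ℝ),
      derivWithin (derivWithin h₁ (Ici 0)) (Ici 0) t = G t * h₁ t)
    (ode₂ : ∀ t ∈ Ici (0 : ℝ),
      derivWithin (derivWithin h₂ (Ici 0)) (Ici 0) t = G t * h₂ t)
    (h₁0 : h₁ 0 = 0) (h₁'0 : derivWithin h₁ (Ici 0) 0 = 1)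
    (h₂0 : h₂ 0 = 1) (h₂'0 : derivWithin h₂ (Ici 0) 0 = 0)
    :
    (∀ t ∈ Ioi (0 : ℝ),
      h₂ t / h₁ t = derivWithin h₂ (Ici 0) t / derivWithin h₁ (Ici 0) t +
        1 / (h₁ t * derivWithin h₁ (Ici 0) t)) ∧
    (IntegrableOn G (Ioi 0) →
      ∀ t ∈ Ioi (0 : ℝ),
        h₂ t / h₁ t ≤ (∫ s in Ioi (0 : ℝ), G s) + 1 / t) :=
  stmt_6_general G h₁ h₂ hGnn hh₁ hh₂ ode₁ ode₂ h₁0 h₁'0 h₂0 h₂'0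
end

section
/- The limit lim_{t→∞} h'(t) exists, is finite, and equals 1 + ∫₀^∞ λ(s)·h(s) ds; moreover this limit is at least 1 + b₀. -/
/-!
Write `g = h'`. If `g` had a first zero `t₀`, then `h` would be nondecreasing and hence
nonnegative on `[0, t₀]`, so `g' = λ h ≥ 0` there and `g t₀ ≥ g 0 = 1`; thus `g > 0`,
`h ≥ 0` and `g` is nondecreasing, which gives `t ≤ h t ≤ t g t`. The upper bound yields
`(log g)' = λ h / g ≤ t λ`, so `g ≤ exp b₀`. Being nondecreasing and bounded, `g` converges,
and since `g' = λ h ≥ 0` its limit is `1 + ∫₀^∞ λ h`; the lower bound `h s ≥ s` compares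
this integral with `b₀`.
-/

open Set Filter MeasureTheory Real

lemma MonotoneOn.exists_tendsto_atTop {f : ℝ → ℝ} {a : ℝ} (hf : MonotoneOn f (Ici a))
    (hbdd : BddAbove (f '' Ici a)) : ∃ l, Tendsto f atTop (nhds l) := by
  have hmono : Monotone fun t => f (max a t) := fun x y hxy =>
    hf (mem_Ici.2 (le_max_left _ _)) (mem_Ici.2 (le_max_left _ _)) (max_le_max le_rfl hxy)
  have hbdd' : BddAbove (range fun t => f (max a t)) :=
    hbdd.mono (range_subset_iff.2 fun t => mem_image_of_mem f (mem_Ici.2 (le_max_left a t)))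
  refine ⟨_, (tendsto_atTop_ciSup hmono hbdd').congr' ?_⟩
  filter_upwards [eventually_ge_atTop a] with t ht
  rw [max_eq_right ht]

lemma monotoneOn_Ici_of_hasDerivAt_nonneg {f f' : ℝ → ℝ} {a : ℝ}
    (hf : ContinuousOn f (Ici a)) (hf' : ∀ x ∈ Ioi a, HasDerivAt f (f' x) x)
    (hf'₀ : ∀ x ∈ Ioi a, 0 ≤ f' x) : MonotoneOn f (Ici a) :=
  monotoneOn_of_hasDerivWithinAt_nonneg (convex_Ici a) hf
    (by simpa only [interior_Ici] using fun x hx => (hf' x hx).hasDerivWithinAt)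
    (by simpa only [interior_Ici] using hf'₀)

/-- `(h, g) = (h, h')` for a solution of `h'' = lam * h` on `[0, ∞)`. -/
structure IsSolutionOnIci (lam h g : ℝ → ℝ) : Prop where
  continuousOn_fun : ContinuousOn h (Ici 0)
  continuousOn_deriv : ContinuousOn g (Ici 0)
  hasDerivAt_fun : ∀ t ∈ Ioi (0 : ℝ), HasDerivAt h (g t) t
  hasDerivAt_deriv : ∀ t ∈ Ioi (0 : ℝ), HasDerivAt g (lam t * h t) t

namespace IsSolutionOnIci

variable {lam h g : ℝ → ℝ}

theorem of_contDiffOn (hh : ContDiffOn ℝ 2 h (Ici 0))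
    (ode : ∀ t ∈ Ici (0 : ℝ), derivWithin (derivWithin h (Ici 0)) (Ici 0) t = lam t * h t) :
    IsSolutionOnIci lam h (derivWithin h (Ici 0)) := by
  have hg : ContDiffOn ℝ 1 (derivWithin h (Ici 0)) (Ici 0) :=
    hh.derivWithin (uniqueDiffOn_Ici 0) (by norm_num)
  refine ⟨hh.continuousOn, hg.continuousOn, fun t ht => ?_, fun t ht => ?_⟩
  · exact ((hh.differentiableOn (by norm_num)) t (Ioi_subset_Ici_self ht)).hasDerivWithinAt
      |>.hasDerivAt (Ici_mem_nhds ht)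
  · rw [← ode t (Ioi_subset_Ici_self ht)]
    exact ((hg.differentiableOn one_ne_zero) t (Ioi_subset_Ici_self ht)).hasDerivWithinAt
      |>.hasDerivAt (Ici_mem_nhds ht)

theorem monotoneOn_Icc_of_pos (hs : IsSolutionOnIci lam h g)
    (hlam : ∀ t ∈ Ioi (0 : ℝ), 0 ≤ lam t) (hh0 : 0 ≤ h 0) {b : ℝ}
    (hpos : ∀ t ∈ Ioo 0 b, 0 < g t) :
    MonotoneOn h (Icc 0 b) ∧ MonotoneOn g (Icc 0 b) := by
  have hh : MonotoneOn h (Icc 0 b) :=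
    monotoneOn_of_hasDerivWithinAt_nonneg (convex_Icc 0 b)
      (hs.continuousOn_fun.mono Icc_subset_Ici_self)
      (by simpa only [interior_Icc] using fun t ht => (hs.hasDerivAt_fun t ht.1).hasDerivWithinAt)
      (by simpa only [interior_Icc] using fun t ht => (hpos t ht).le)
  refine ⟨hh, monotoneOn_of_hasDerivWithinAt_nonneg (f' := fun t => lam t * h t)
    (convex_Icc 0 b) (hs.continuousOn_deriv.mono Icc_subset_Ici_self) ?_ ?_⟩
  · simpa only [interior_Icc] using fun t ht => (hs.hasDerivAt_deriv t ht.1).hasDerivWithinAt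
  · rw [interior_Icc]
    intro t ht
    have h0t : h 0 ≤ h t :=
      hh ⟨le_rfl, ht.1.le.trans ht.2.le⟩ (Ioo_subset_Icc_self ht) ht.1.le
    exact mul_nonneg (hlam t ht.1) (hh0.trans h0t)

theorem pos (hs : IsSolutionOnIci lam h g) (hlam : ∀ t ∈ Ioi (0 : ℝ), 0 ≤ lam t)
    (hh0 : 0 ≤ h 0) (hg0 : 0 < g 0) {t : ℝ} (ht : 0 ≤ t) : 0 < g t := by
  by_contra! hgt
  set T := Ici 0 ∩ g ⁻¹' Iic 0
  have hbdd : BddBelow T := ⟨0, fun x hx => hx.1⟩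
  have hT : sInf T ∈ T :=
    (hs.continuousOn_deriv.preimage_isClosed_of_isClosed isClosed_Ici isClosed_Iic).csInf_mem
      ⟨t, ht, hgt⟩ hbdd
  have hpos : ∀ s ∈ Ioo 0 (sInf T), 0 < g s := fun s hsT => by
    by_contra! hgs
    exact (csInf_le hbdd ⟨hsT.1.le, hgs⟩).not_gt hsT.2
  have hle : g 0 ≤ g (sInf T) :=
    (hs.monotoneOn_Icc_of_pos hlam hh0 hpos).2 ⟨le_rfl, hT.1⟩ ⟨hT.1, le_rfl⟩ hT.1
  have hgT : g (sInf T) ≤ 0 := hT.2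
  linarith

theorem monotoneOn (hs : IsSolutionOnIci lam h g) (hlam : ∀ t ∈ Ioi (0 : ℝ), 0 ≤ lam t)
    (hh0 : 0 ≤ h 0) (hg0 : 0 < g 0) : MonotoneOn h (Ici 0) ∧ MonotoneOn g (Ici 0) := by
  have hIcc (b : ℝ) : MonotoneOn h (Icc 0 b) ∧ MonotoneOn g (Icc 0 b) :=
    hs.monotoneOn_Icc_of_pos hlam hh0 fun t ht => hs.pos hlam hh0 hg0 ht.1.le
  exact ⟨fun x hx y hy hxy => (hIcc y).1 ⟨hx, hxy⟩ ⟨hy, le_rfl⟩ hxy,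
    fun x hx y hy hxy => (hIcc y).2 ⟨hx, hxy⟩ ⟨hy, le_rfl⟩ hxy⟩

theorem le_fun (hs : IsSolutionOnIci lam h g) (hlam : ∀ t ∈ Ioi (0 : ℝ), 0 ≤ lam t)
    (h0 : h 0 = 0) (g0 : g 0 = 1) {t : ℝ} (ht : 0 ≤ t) : t ≤ h t := by
  have hg := (hs.monotoneOn hlam h0.ge (g0 ▸ one_pos)).2
  have hmono : MonotoneOn (fun s => h s - s) (Ici 0) :=
    monotoneOn_Ici_of_hasDerivAt_nonneg (hs.continuousOn_fun.sub continuousOn_id)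
      (fun s hs' => (hs.hasDerivAt_fun s hs').sub (hasDerivAt_id s))
      (fun s hs' => sub_nonneg.2 (g0 ▸ hg self_mem_Ici (Ioi_subset_Ici_self hs') hs'.out.le))
  have := hmono self_mem_Ici ht ht
  simp only [h0, sub_zero] at this
  linarith

theorem fun_le_mul_deriv (hs : IsSolutionOnIci lam h g)
    (hlam : ∀ t ∈ Ioi (0 : ℝ), 0 ≤ lam t) (h0 : h 0 = 0) (g0 : g 0 = 1) {t : ℝ}
    (ht : 0 ≤ t) : h t ≤ t * g t := by
  have hmono : MonotoneOn (fun s => s * g s - h s) (Ici 0) :=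
    monotoneOn_Ici_of_hasDerivAt_nonneg
      ((continuousOn_id.mul hs.continuousOn_deriv).sub hs.continuousOn_fun)
      (fun s hs' =>
        ((hasDerivAt_id s).mul (hs.hasDerivAt_deriv s hs')).sub (hs.hasDerivAt_fun s hs'))
      (fun s hs' => by
        have hhs : 0 ≤ h s := (hs.le_fun hlam h0 g0 hs'.out.le).trans' hs'.out.le
        have : 0 ≤ s * (lam s * h s) := mul_nonneg hs'.out.le (mul_nonneg (hlam s hs') hhs)
        simpa only [id, one_mul, add_sub_cancel_left] using this)
  have := hmono self_mem_Ici ht ht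
  simp only [h0, zero_mul, sub_zero] at this
  linarith

theorem log_le_integral (hs : IsSolutionOnIci lam h g) (hlam : ∀ t ∈ Ioi (0 : ℝ), 0 ≤ lam t)
    (h0 : h 0 = 0) (g0 : g 0 = 1) {t : ℝ} (ht : 0 ≤ t)
    (hint : IntegrableOn (fun s => s * lam s) (Icc 0 t)) :
    log (g t) ≤ ∫ s in 0..t, s * lam s := by
  have hpos {s : ℝ} (hs' : 0 ≤ s) : 0 < g s := hs.pos hlam h0.ge (g0 ▸ one_pos) hs'
  have := intervalIntegral.sub_le_integral_of_hasDeriv_right_of_le ht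
    ((hs.continuousOn_deriv.mono Icc_subset_Ici_self).log fun s hs' => (hpos hs'.1).ne')
    (fun s hs' => ((hs.hasDerivAt_deriv s hs'.1).log (hpos hs'.1.le).ne').hasDerivWithinAt) hint
    (fun s hs' => by
      rw [div_le_iff₀ (hpos hs'.1.le)]
      calc lam s * h s ≤ lam s * (s * g s) :=
            mul_le_mul_of_nonneg_left (hs.fun_le_mul_deriv hlam h0 g0 hs'.1.le) (hlam s hs'.1)
        _ = s * lam s * g s := by ring)
  rwa [g0, log_one, sub_zero] at this

theorem le_exp_integral (hs : IsSolutionOnIci lam h g) (hlam : ∀ t ∈ Ioi (0 : ℝ), 0 ≤ lam t)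
    (h0 : h 0 = 0) (g0 : g 0 = 1) (hb : IntegrableOn (fun s => s * lam s) (Ioi 0))
    {t : ℝ} (ht : 0 ≤ t) : g t ≤ exp (∫ s in Ioi 0, s * lam s) := by
  have hint : IntegrableOn (fun s => s * lam s) (Icc 0 t) :=
    ((integrableOn_Ici_iff_integrableOn_Ioi).mpr hb).mono_set Icc_subset_Ici_self
  have hnn : 0 ≤ᵐ[volume.restrict (Ioi 0)] fun s => s * lam s := by
    filter_upwards [ae_restrict_mem measurableSet_Ioi] with s hs'
    exact mul_nonneg hs'.out.le (hlam s hs')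
  calc g t = exp (log (g t)) := (exp_log (hs.pos hlam h0.ge (g0 ▸ one_pos) ht)).symm
    _ ≤ exp (∫ s in 0..t, s * lam s) := exp_le_exp.2 (hs.log_le_integral hlam h0 g0 ht hint)
    _ ≤ exp (∫ s in Ioi 0, s * lam s) := by
      rw [intervalIntegral.integral_of_le ht]
      exact exp_le_exp.2 (setIntegral_mono_set hb hnn Ioc_subset_Ioi_self.eventuallyLE)

theorem tendsto_one_add_integral (hs : IsSolutionOnIci lam h g)
    (hlam : ∀ t ∈ Ioi (0 : ℝ), 0 ≤ lam t) (h0 : h 0 = 0) (g0 : g 0 = 1)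
    (hb : IntegrableOn (fun s => s * lam s) (Ioi 0)) :
    IntegrableOn (fun s => lam s * h s) (Ioi 0) ∧
      Tendsto g atTop (nhds (1 + ∫ s in Ioi 0, lam s * h s)) := by
  obtain ⟨l, hl⟩ := (hs.monotoneOn hlam h0.ge (g0 ▸ one_pos)).2.exists_tendsto_atTop
    ⟨_, forall_mem_image.2 fun t ht => hs.le_exp_integral hlam h0 g0 hb ht⟩
  have hcont : ContinuousWithinAt g (Ici 0) 0 := hs.continuousOn_deriv 0 self_mem_Ici
  have hnn : ∀ t ∈ Ioi (0 : ℝ), 0 ≤ lam t * h t := fun t ht =>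
    mul_nonneg (hlam t ht) ((hs.le_fun hlam h0 g0 ht.out.le).trans' ht.out.le)
  refine ⟨integrableOn_Ioi_deriv_of_nonneg hcont hs.hasDerivAt_deriv hnn hl, ?_⟩
  rwa [integral_Ioi_of_hasDerivAt_of_nonneg hcont hs.hasDerivAt_deriv hnn hl, g0,
    add_sub_cancel]

end IsSolutionOnIci

theorem stmt_11_general (lam h : ℝ → ℝ)
    (hlamnn : ∀ t ∈ Ici (0 : ℝ), 0 ≤ lam t)
    (hb₀ : IntegrableOn (fun s => s * lam s) (Ioi 0))
    (hh : ContDiffOn ℝ 2 h (Ici 0))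
    (ode : ∀ t ∈ Ici (0 : ℝ),
      derivWithin (derivWithin h (Ici 0)) (Ici 0) t = lam t * h t)
    (h0 : h 0 = 0) (h'0 : derivWithin h (Ici 0) 0 = 1)
    :
    IntegrableOn (fun s => lam s * h s) (Ioi 0) ∧
    Tendsto (derivWithin h (Ici 0)) atTop
      (nhds (1 + ∫ s in Ioi (0 : ℝ), lam s * h s)) ∧
    1 + (∫ s in Ioi (0 : ℝ), s * lam s) ≤ 1 + ∫ s in Ioi (0 : ℝ), lam s * h s := by
  have hs := IsSolutionOnIci.of_contDiffOn hh ode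
  have hlam : ∀ t ∈ Ioi (0 : ℝ), 0 ≤ lam t := fun t ht => hlamnn t (Ioi_subset_Ici_self ht)
  obtain ⟨hint, hlim⟩ := hs.tendsto_one_add_integral hlam h0 h'0 hb₀
  refine ⟨hint, hlim, add_le_add_right (setIntegral_mono_on hb₀ hint measurableSet_Ioi
    fun s hs' => ?_) 1⟩
  rw [mul_comm]
  exact mul_le_mul_of_nonneg_left (hs.le_fun hlam h0 h'0 hs'.out.le) (hlam s hs')

/-- `lim_{t→∞} h'(t)` exists, is finite, equals `1 + ∫₀^∞ λ(s) h(s) ds`, and is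
at least `1 + b₀` where `b₀ = ∫₀^∞ s λ(s) ds`. -/
theorem stmt_11 (lam h : ℝ → ℝ)
    (hlamc : ContinuousOn lam (Ici 0)) (hlamnn : ∀ t ∈ Ici (0 : ℝ), 0 ≤ lam t)
    (hlamanti : AntitoneOn lam (Ici 0))
    (hb₀ : IntegrableOn (fun s => s * lam s) (Ioi 0))
    (hh : ContDiffOn ℝ 2 h (Ici 0))
    (ode : ∀ t ∈ Ici (0 : ℝ),
      derivWithin (derivWithin h (Ici 0)) (Ici 0) t = lam t * h t)
    (h0 : h 0 = 0) (h'0 : derivWithin h (Ici 0) 0 = 1)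
    :
    IntegrableOn (fun s => lam s * h s) (Ioi 0) ∧
    Tendsto (derivWithin h (Ici 0)) atTop
      (nhds (1 + ∫ s in Ioi (0 : ℝ), lam s * h s)) ∧
    1 + (∫ s in Ioi (0 : ℝ), s * lam s) ≤ 1 + ∫ s in Ioi (0 : ℝ), lam s * h s :=
  stmt_11_general lam h hlamnn hb₀ hh ode h0 h'0
end

section
/- Define ψ := ψ₂ + b·ψ₁. Then ψ(t) > 0 for all t ∈ [0,r), g(t) ≤ ψ'(t)/ψ(t) for all t ∈ (0,r), and exp(∫₀^t g(s) ds) ≤ ψ(t) for all t ∈ [0,r). -/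
/-!
With `φ = ψ'`, the quantity `V = ψ (φ - g ψ)` vanishes at `0` and satisfies
`V' = (φ - g ψ)² + ψ² (Λ - g' - g²) ≥ 0`, so `V ≥ 0`. With `G = ∫₀ᵗ g`, this makes
`(ψ e^{-G})²` nondecreasing (its derivative is `2 e^{-2G} V`), hence `≥ 1`. So `ψ` never
vanishes and, starting from `ψ 0 = 1`, stays positive; then `V ≥ 0` reads `g ≤ ψ'/ψ` and
`ψ e^{-G} ≥ 1` reads `e^G ≤ ψ`.
-/

open Set

theorem IsPreconnected.pos_of_ne_zero {s : Set ℝ} {f : ℝ → ℝ} (hs : IsPreconnected s)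
    (hf : ContinuousOn f s) (hf0 : ∀ x ∈ s, f x ≠ 0) {a : ℝ} (ha : a ∈ s) (hfa : 0 < f a) :
    ∀ x ∈ s, 0 < f x := by
  intro x hx
  by_contra! hfx
  obtain ⟨y, hy, hfy⟩ := hs.intermediate_value hx ha hf ⟨hfx, hfa.le⟩
  exact hf0 y hy hfy

theorem hasDerivAt_intervalIntegral_of_continuousOn {g : ℝ → ℝ} {a b x : ℝ}
    (hg : ContinuousOn g (Icc a b)) (hx : x ∈ Ioo a b) :
    HasDerivAt (fun t => ∫ s in a..t, g s) (g x) x :=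
  intervalIntegral.integral_hasDerivAt_right
    ((hg.mono (Icc_subset_Icc_right hx.2.le)).intervalIntegrable_of_Icc hx.1.le)
    ((hg.mono Ioo_subset_Icc_self).stronglyMeasurableAtFilter isOpen_Ioo x hx)
    (hg.continuousAt (Icc_mem_nhds hx.1 hx.2))

theorem ContDiffOn.hasDerivAt_derivWithin_Ici {f : ℝ → ℝ} {a t : ℝ} {n : WithTop ℕ∞}
    (hf : ContDiffOn ℝ n f (Ici a)) (hn : n ≠ 0) (ht : a < t) :
    HasDerivAt f (derivWithin f (Ici a) t) t :=
  ((hf.differentiableOn hn) t (le_of_lt ht)).hasDerivWithinAt.hasDerivAt (Ici_mem_nhds ht)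

theorem ContDiffOn.hasDerivAt_derivWithin_derivWithin_Ici {f : ℝ → ℝ} {a t : ℝ}
    (hf : ContDiffOn ℝ 2 f (Ici a)) (ht : a < t) :
    HasDerivAt (derivWithin f (Ici a)) (derivWithin (derivWithin f (Ici a)) (Ici a) t) t :=
  (hf.derivWithin (uniqueDiffOn_Ici a) (by norm_num)).hasDerivAt_derivWithin_Ici one_ne_zero ht

section Riccati

variable {ψ φ g : ℝ → ℝ} {D : Set ℝ}

theorem monotoneOn_mul_sub_mul_of_riccati {g' Λ : ℝ → ℝ} (hD : Convex ℝ D)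
    (hψc : ContinuousOn ψ D) (hφc : ContinuousOn φ D) (hgc : ContinuousOn g D)
    (hψ : ∀ t ∈ interior D, HasDerivAt ψ (φ t) t)
    (hφ : ∀ t ∈ interior D, HasDerivAt φ (Λ t * ψ t) t)
    (hg : ∀ t ∈ interior D, HasDerivAt g (g' t) t)
    (hric : ∀ t ∈ interior D, g' t + g t ^ 2 ≤ Λ t) :
    MonotoneOn (fun t => ψ t * (φ t - g t * ψ t)) D := by
  refine monotoneOn_of_hasDerivWithinAt_nonneg hD (by fun_prop)
    (fun t ht => (((hψ t ht).mul ((hφ t ht).sub ((hg t ht).mul (hψ t ht)))).hasDerivWithinAt))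
    fun t ht => ?_
  have hq := sub_nonneg.2 (hric t ht)
  calc 0 ≤ (φ t - g t * ψ t) ^ 2 + ψ t ^ 2 * (Λ t - (g' t + g t ^ 2)) := by positivity
    _ = _ := by simp only [Pi.sub_apply, Pi.mul_apply]; ring

theorem monotoneOn_sq_mul_exp_neg {G : ℝ → ℝ} (hD : Convex ℝ D)
    (hψc : ContinuousOn ψ D) (hGc : ContinuousOn G D)
    (hψ : ∀ t ∈ interior D, HasDerivAt ψ (φ t) t) (hG : ∀ t ∈ interior D, HasDerivAt G (g t) t)
    (hV : ∀ t ∈ interior D, 0 ≤ ψ t * (φ t - g t * ψ t)) :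
    MonotoneOn (fun t => (ψ t * Real.exp (-G t)) ^ 2) D := by
  refine monotoneOn_of_hasDerivWithinAt_nonneg hD (by fun_prop)
    (fun t ht => (((hψ t ht).mul (hG t ht).neg.exp).pow 2).hasDerivWithinAt) fun t ht => ?_
  have := hV t ht
  calc 0 ≤ 2 * Real.exp (-G t) ^ 2 * (ψ t * (φ t - g t * ψ t)) := by positivity
    _ = _ := by simp only [Pi.mul_apply, Pi.neg_apply]; push_cast; ring

theorem riccati_comparison {g' Λ : ℝ → ℝ} {a b : ℝ} (hab : a ≤ b)
    (hψc : ContinuousOn ψ (Icc a b)) (hφc : ContinuousOn φ (Icc a b))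
    (hgc : ContinuousOn g (Icc a b))
    (hψ : ∀ t ∈ Ioo a b, HasDerivAt ψ (φ t) t) (hφ : ∀ t ∈ Ioo a b, HasDerivAt φ (Λ t * ψ t) t)
    (hg : ∀ t ∈ Ioo a b, HasDerivAt g (g' t) t) (hric : ∀ t ∈ Ioo a b, g' t + g t ^ 2 ≤ Λ t)
    (hψa : ψ a = 1) (hφa : φ a = g a) :
    0 < ψ b ∧ g b * ψ b ≤ φ b ∧ Real.exp (∫ s in a..b, g s) ≤ ψ b := by
  set G : ℝ → ℝ := fun t => ∫ s in a..t, g s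
  have hD : Convex ℝ (Icc a b) := convex_Icc a b
  rw [← interior_Icc] at hψ hφ hg hric
  have ha : a ∈ Icc a b := left_mem_Icc.2 hab
  have hb : b ∈ Icc a b := right_mem_Icc.2 hab
  have hV := monotoneOn_mul_sub_mul_of_riccati hD hψc hφc hgc hψ hφ hg hric
  have hV0 : ∀ t ∈ Icc a b, 0 ≤ ψ t * (φ t - g t * ψ t) := fun t ht => by
    simpa [hψa, hφa] using hV ha ht ht.1
  have hGc : ContinuousOn G (Icc a b) := by
    simpa [uIcc_of_le hab] using intervalIntegral.continuousOn_primitive_interval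
      (hgc.integrableOn_Icc.mono_set (uIcc_of_le hab).subset)
  have hU := monotoneOn_sq_mul_exp_neg hD hψc hGc hψ
    (fun t ht => hasDerivAt_intervalIntegral_of_continuousOn hgc (by rwa [interior_Icc] at ht))
    (fun t ht => hV0 t (interior_subset ht))
  have hU1 : ∀ t ∈ Icc a b, 1 ≤ (ψ t * Real.exp (-G t)) ^ 2 := fun t ht => by
    simpa [G, hψa] using hU ha ht ht.1
  have hpos : ∀ t ∈ Icc a b, 0 < ψ t :=
    isPreconnected_Icc.pos_of_ne_zero hψc
      (fun t ht h0 => absurd (hU1 t ht) (by simp [h0])) ha (hψa ▸ one_pos)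
  refine ⟨hpos b hb, ?_, ?_⟩
  · nlinarith [hV0 b hb, hpos b hb]
  · have hb1 : 1 ≤ ψ b * Real.exp (-G b) := by
      nlinarith [hU1 b hb, mul_pos (hpos b hb) (Real.exp_pos (-G b))]
    rwa [Real.exp_neg, ← div_eq_mul_inv, one_le_div (Real.exp_pos _)] at hb1

end Riccati

theorem stmt_16_general (Λ g ψ₁ ψ₂ : ℝ → ℝ)
    (r b : ℝ)
    (hgc : ContinuousOn g (Ico 0 r)) (hg1 : ContDiffOn ℝ 1 g (Ioo 0 r))
    (hric : ∀ t ∈ Ioo (0 : ℝ) r, deriv g t + g t ^ 2 ≤ Λ t)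
    (hg0 : g 0 = b)
    (hψ₁ : ContDiffOn ℝ 2 ψ₁ (Ici 0)) (hψ₂ : ContDiffOn ℝ 2 ψ₂ (Ici 0))
    (odeψ₁ : ∀ t ∈ Ici (0 : ℝ),
      derivWithin (derivWithin ψ₁ (Ici 0)) (Ici 0) t = Λ t * ψ₁ t)
    (odeψ₂ : ∀ t ∈ Ici (0 : ℝ),
      derivWithin (derivWithin ψ₂ (Ici 0)) (Ici 0) t = Λ t * ψ₂ t)
    (ψ₁0 : ψ₁ 0 = 0) (ψ₁'0 : derivWithin ψ₁ (Ici 0) 0 = 1)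
    (ψ₂0 : ψ₂ 0 = 1) (ψ₂'0 : derivWithin ψ₂ (Ici 0) 0 = 0)
    :
    (∀ t ∈ Ico (0 : ℝ) r, 0 < ψ₂ t + b * ψ₁ t) ∧
    (∀ t ∈ Ioo (0 : ℝ) r,
      g t ≤ (derivWithin ψ₂ (Ici 0) t + b * derivWithin ψ₁ (Ici 0) t) /
        (ψ₂ t + b * ψ₁ t)) ∧
    (∀ t ∈ Ico (0 : ℝ) r,
      Real.exp (∫ s in (0 : ℝ)..t, g s) ≤ ψ₂ t + b * ψ₁ t) := by
  set ψ : ℝ → ℝ := fun t => ψ₂ t + b * ψ₁ t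
  set φ : ℝ → ℝ := fun t => derivWithin ψ₂ (Ici 0) t + b * derivWithin ψ₁ (Ici 0) t
  have hψc : ContinuousOn ψ (Ici 0) :=
    hψ₂.continuousOn.add (continuousOn_const.mul hψ₁.continuousOn)
  have hφc : ContinuousOn φ (Ici 0) :=
    (hψ₂.continuousOn_derivWithin (uniqueDiffOn_Ici 0) one_le_two).add
      (continuousOn_const.mul (hψ₁.continuousOn_derivWithin (uniqueDiffOn_Ici 0) one_le_two))
  have hψ : ∀ t ∈ Ioi (0 : ℝ), HasDerivAt ψ (φ t) t := fun t ht =>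
    (hψ₂.hasDerivAt_derivWithin_Ici two_ne_zero ht).add
      ((hψ₁.hasDerivAt_derivWithin_Ici two_ne_zero ht).const_mul b)
  have hφ : ∀ t ∈ Ioi (0 : ℝ), HasDerivAt φ (Λ t * ψ t) t := fun t ht => by
    have := (hψ₂.hasDerivAt_derivWithin_derivWithin_Ici ht).add
      ((hψ₁.hasDerivAt_derivWithin_derivWithin_Ici ht).const_mul b)
    rw [odeψ₂ t (mem_Ici.2 ht.le), odeψ₁ t (mem_Ici.2 ht.le)] at this
    exact this.congr_deriv (by ring)
  have key : ∀ t ∈ Ico (0 : ℝ) r,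
      0 < ψ t ∧ g t * ψ t ≤ φ t ∧ Real.exp (∫ s in (0 : ℝ)..t, g s) ≤ ψ t := by
    intro t ht
    have hIcc : Icc 0 t ⊆ Ico 0 r := Icc_subset_Ico_right ht.2
    have hIoo : Ioo 0 t ⊆ Ioo 0 r := Ioo_subset_Ioo_right ht.2.le
    exact riccati_comparison ht.1 (hψc.mono fun s hs => hs.1) (hφc.mono fun s hs => hs.1)
      (hgc.mono hIcc) (fun s hs => hψ s hs.1) (fun s hs => hφ s hs.1)
      (fun s hs => ((hg1.differentiableOn one_ne_zero s (hIoo hs)).differentiableAt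
        (isOpen_Ioo.mem_nhds (hIoo hs))).hasDerivAt)
      (fun s hs => hric s (hIoo hs)) (by simp [ψ, ψ₁0, ψ₂0]) (by simp [φ, ψ₁'0, ψ₂'0, hg0])
  refine ⟨fun t ht => (key t ht).1, fun t ht => ?_, fun t ht => (key t ht).2.2⟩
  obtain ⟨hpos, hle, -⟩ := key t (Ioo_subset_Ico_self ht)
  exact (le_div_iff₀ hpos).2 hle

/-- With `ψ := ψ₂ + b ψ₁`: `ψ > 0` on `[0,r)`, `g ≤ ψ'/ψ` on `(0,r)`, and
`exp(∫₀^t g) ≤ ψ(t)` on `[0,r)`, where `g` satisfies the Riccati inequality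
`g' + g² ≤ Λ` on `(0,r)` with `g(0) = b`. -/
theorem stmt_16 (Λ g ψ₁ ψ₂ : ℝ → ℝ)
    (hΛc : ContinuousOn Λ (Ici 0)) (hΛnn : ∀ t ∈ Ici (0 : ℝ), 0 ≤ Λ t)
    (r b : ℝ) (hr : 0 < r)
    (hgc : ContinuousOn g (Ico 0 r)) (hg1 : ContDiffOn ℝ 1 g (Ioo 0 r))
    (hric : ∀ t ∈ Ioo (0 : ℝ) r, deriv g t + g t ^ 2 ≤ Λ t)
    (hg0 : g 0 = b)
    (hψ₁ : ContDiffOn ℝ 2 ψ₁ (Ici 0)) (hψ₂ : ContDiffOn ℝ 2 ψ₂ (Ici 0))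
    (odeψ₁ : ∀ t ∈ Ici (0 : ℝ),
      derivWithin (derivWithin ψ₁ (Ici 0)) (Ici 0) t = Λ t * ψ₁ t)
    (odeψ₂ : ∀ t ∈ Ici (0 : ℝ),
      derivWithin (derivWithin ψ₂ (Ici 0)) (Ici 0) t = Λ t * ψ₂ t)
    (ψ₁0 : ψ₁ 0 = 0) (ψ₁'0 : derivWithin ψ₁ (Ici 0) 0 = 1)
    (ψ₂0 : ψ₂ 0 = 1) (ψ₂'0 : derivWithin ψ₂ (Ici 0) 0 = 0)
    :
    (∀ t ∈ Ico (0 : ℝ) r, 0 < ψ₂ t + b * ψ₁ t) ∧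
    (∀ t ∈ Ioo (0 : ℝ) r,
      g t ≤ (derivWithin ψ₂ (Ici 0) t + b * derivWithin ψ₁ (Ici 0) t) /
        (ψ₂ t + b * ψ₁ t)) ∧
    (∀ t ∈ Ico (0 : ℝ) r,
      Real.exp (∫ s in (0 : ℝ)..t, g s) ≤ ψ₂ t + b * ψ₁ t) :=
  stmt_16_general Λ g ψ₁ ψ₂ r b hgc hg1 hric hg0 hψ₁ hψ₂ odeψ₁ odeψ₂ ψ₁0 ψ₁'0 ψ₂0 ψ₂'0
end
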